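/- Let S̃ be a planar surface and let Õ ⊂ S̃ be a subset such that: (1) Õ is discrete as a subset of S̃, and (2) the collection Γ = {β_õ : õ ∈ Õ} of basepoint changing isomorphisms forms a group of translation automorphisms of S̃. Then there is a translation surface S ∈ M whose universal cover is S̃ and such that p_S^{-1}(o_S) = Õ, where p_S : S̃ → S is the universal covering map. -/

import Mathlib

open Set Topology Filter

noncomputable section

/-- The plane `ℝ²`, modeled as `Fin 2 → ℝ`. -/
abbrev Plane : Type := Fin 2 → ℝ

/-- Two partial homeomorphisms (charts) to the plane are *translation compatible* if
their transition function is locally the restriction of a translation. -/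
def TranslationCompatible {X : Type} [TopologicalSpace X]
    (c₁ c₂ : OpenPartialHomeomorph X Plane) : Prop :=
  ∀ x ∈ c₁.source ∩ c₂.source, ∃ v : Plane,
    ∀ᶠ y in 𝓝 x, y ∈ c₁.source ∩ c₂.source → c₂ y = c₁ y + v

/-- A translation structure: a connected surface equipped with a maximal atlas of charts
to the plane whose transition functions are locally translations.  (The charts are local
homeomorphisms from open subsets of `X` to `ℝ²`; since the transitions are translations,
the atlas determines an orientation, so orientability is automatic.) -/
structure TranslationSurface : Type 1 where
  X : Type
  [top : TopologicalSpace X]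
  [t2 : T2Space X]
  [conn : ConnectedSpace X]
  charts : Set (OpenPartialHomeomorph X Plane)
  chart_cover : ∀ x : X, ∃ c ∈ charts, x ∈ c.source
  compat : ∀ c₁ ∈ charts, ∀ c₂ ∈ charts, TranslationCompatible c₁ c₂
  maximal : ∀ c : OpenPartialHomeomorph X Plane,
      (∀ c' ∈ charts, TranslationCompatible c c' ∧ TranslationCompatible c' c) →
      c ∈ charts

attribute [instance] TranslationSurface.top TranslationSurface.t2 TranslationSurface.conn

/-- A pointed translation surface. -/
structure PointedTranslationSurface : Type 1 extends TranslationSurface where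
  basepoint : X

/-- A pointed translation surface with a second marked point. -/
structure TwoPointedTranslationSurface : Type 1 extends PointedTranslationSurface where
  pt : X

/-- An immersion of the subset `A` of the pointed translation surface `S` into the subset
`B` of the pointed translation surface `T`: a continuous basepoint-respecting map which is
locally a translation in the charts of the two translation structures. -/
structure Immersion (S T : PointedTranslationSurface) (A : Set S.X) (B : Set T.X) :
    Type where
  toFun : A → T.X
  continuous : Continuous toFun
  mapsTo : ∀ a : A, toFun a ∈ B
  base_mem : S.basepoint ∈ A
  map_base : toFun ⟨S.basepoint, base_mem⟩ = T.basepoint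
  loc : ∀ a : A, ∃ c₁ ∈ S.charts, ∃ c₂ ∈ T.charts, ∃ v : Plane,
      (a : S.X) ∈ c₁.source ∧
      ∀ a' : A, (a' : S.X) ∈ c₁.source →
        toFun a' ∈ c₂.source ∧ c₂ (toFun a') = c₁ (a' : S.X) + v

/-- The push-forward of a chart under a homeomorphism. -/
def pushforward {X Y : Type} [TopologicalSpace X] [TopologicalSpace Y]
    (h : X ≃ₜ Y) (c : OpenPartialHomeomorph X Plane) : OpenPartialHomeomorph Y Plane :=
  (h.symm.toOpenPartialHomeomorph).trans c

/-- `h` carries the translation atlas of `S` to that of `T`. -/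
def IsTranslationIsoCharts (S T : TranslationSurface) (h : S.X ≃ₜ T.X) : Prop :=
  T.charts = {c' | ∃ c ∈ S.charts, c' = pushforward h c}

/-- Isomorphism of pointed translation surfaces. -/
def Iso (S T : PointedTranslationSurface) : Prop :=
  ∃ h : S.X ≃ₜ T.X, h S.basepoint = T.basepoint ∧
    IsTranslationIsoCharts S.toTranslationSurface T.toTranslationSurface h

/-- Isomorphism of two-pointed translation surfaces. -/
def Iso2 (S T : TwoPointedTranslationSurface) : Prop :=
  ∃ h : S.X ≃ₜ T.X, h S.basepoint = T.basepoint ∧ h S.pt = T.pt ∧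
    IsTranslationIsoCharts S.toTranslationSurface T.toTranslationSurface h

/-- The moduli space `M` of all pointed translation structures. -/
def ModuliSpace : Type 1 := Quot Iso

/-- The total space `E` of all two-pointed translation structures. -/
def ESpace : Type 1 := Quot Iso2

def ModuliSpace.mk (S : PointedTranslationSurface) : ModuliSpace := Quot.mk Iso S

def ESpace.mk (T : TwoPointedTranslationSurface) : ESpace := Quot.mk Iso2 T

/-- The canonical projection `π : E → M`. -/
def ESpace.proj : ESpace → ModuliSpace :=
  Quot.lift (fun T => ModuliSpace.mk T.toPointedTranslationSurface) (by
    rintro a b ⟨h, hb, hp, hc⟩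
    exact Quot.sound ⟨h, hb, hc⟩)

/-- A closed disk in a pointed translation surface: a path-connected set containing the
basepoint in its interior and homeomorphic to a closed disk. -/
def IsClosedDisk (S : PointedTranslationSurface) (D : Set S.X) : Prop :=
  IsPathConnected D ∧ S.basepoint ∈ interior D ∧
    Nonempty (↥D ≃ₜ ↥(Metric.closedBall (0 : Plane) 1))

/-- An open disk in a pointed translation surface: a path-connected set containing the
basepoint and homeomorphic to an open disk. -/
def IsOpenDisk (S : PointedTranslationSurface) (U : Set S.X) : Prop :=
  IsPathConnected U ∧ S.basepoint ∈ U ∧ Nonempty (↥U ≃ₜ Plane)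

/-- `M_↝(A)`: the set of (classes of) surfaces into which `A` immerses. -/
def Mimm (S : PointedTranslationSurface) (A : Set S.X) : Set ModuliSpace :=
  {m | ∃ T : PointedTranslationSurface, m = ModuliSpace.mk T ∧
        Nonempty (Immersion S T A Set.univ)}

/-- `M_+(D,U)`: surfaces admitting an immersion of `D` whose basepoint lies in `ι(U)`. -/
def Mplus (S : PointedTranslationSurface) (D U : Set S.X) : Set ModuliSpace :=
  {m | ∃ T : PointedTranslationSurface, m = ModuliSpace.mk T ∧
        ∃ ι : Immersion S T D Set.univ, ∃ x : D, (x : S.X) ∈ U ∧ ι.toFun x = T.basepoint}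

/-- `M_−(D,K)`: surfaces admitting an immersion of `D` whose basepoint avoids `ι(K)`. -/
def Mminus (S : PointedTranslationSurface) (D K : Set S.X) : Set ModuliSpace :=
  {m | ∃ T : PointedTranslationSurface, m = ModuliSpace.mk T ∧
        ∃ ι : Immersion S T D Set.univ, ∀ x : D, (x : S.X) ∈ K → ι.toFun x ≠ T.basepoint}

/-- The defining subbasis of the immersive topology on `M`. -/
def MSubbasis : Set (Set ModuliSpace) :=
  {V | ∃ S : PointedTranslationSurface,
      (∃ D, IsClosedDisk S D ∧ V = Mimm S D) ∨
      (∃ U, IsOpenDisk S U ∧ V = (Mimm S U)ᶜ) ∨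
      (∃ D U, IsClosedDisk S D ∧ IsOpen U ∧ U ⊆ interior D ∧ V = Mplus S D U) ∨
      (∃ D K, IsClosedDisk S D ∧ IsClosed K ∧ K ⊆ D ∧ V = Mminus S D K)}

/-- The immersive topology on `M`: the coarsest topology making the subbasic sets open. -/
instance : TopologicalSpace ModuliSpace := TopologicalSpace.generateFrom MSubbasis

/-- `E_+(D,U)`: pairs `(T,t)` admitting an immersion of `D` with `t ∈ ι(U)`. -/
def Eplus (S : PointedTranslationSurface) (D U : Set S.X) : Set ESpace :=
  {e | ∃ T : TwoPointedTranslationSurface, e = ESpace.mk T ∧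
        ∃ ι : Immersion S T.toPointedTranslationSurface D Set.univ,
          ∃ x : D, (x : S.X) ∈ U ∧ ι.toFun x = T.pt}

/-- The defining subbasis of the immersive topology on `E`. -/
def ESubbasis : Set (Set ESpace) :=
  {V | ∃ W : Set ModuliSpace, IsOpen W ∧ V = ESpace.proj ⁻¹' W} ∪
  {V | ∃ (S : PointedTranslationSurface) (D U : Set S.X),
        IsClosedDisk S D ∧ IsOpen U ∧ U ⊆ interior D ∧ V = Eplus S D U}

/-- The immersive topology on `E`: the coarsest topology making `π` continuous and the
sets `E_+(D,U)` open. -/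
instance : TopologicalSpace ESpace := TopologicalSpace.generateFrom ESubbasis

/-- `p : P → S` is locally a translation with respect to the two translation structures. -/
def IsLocalTranslationMap (P S : PointedTranslationSurface) (p : P.X → S.X) : Prop :=
  ∀ x : P.X, ∃ c₁ ∈ P.charts, ∃ c₂ ∈ S.charts, ∃ v : Plane,
    x ∈ c₁.source ∧ ∀ y ∈ c₁.source, p y ∈ c₂.source ∧ c₂ (p y) = c₁ y + v

/-- `(P,p)` is the universal cover of the translation surface `S`: `p` is a
basepoint-preserving covering map from a simply connected surface which respects the
translation structures (so that the structure on `P` is the pullback of that on `S`). -/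
def IsTranslationCover (P S : PointedTranslationSurface) (p : P.X → S.X) : Prop :=
  IsCoveringMap p ∧ SimplyConnectedSpace P.X ∧ p P.basepoint = S.basepoint ∧
    IsLocalTranslationMap P S p

/-- A planar surface: a translation surface homeomorphic to an open disk. -/
def IsPlanar (P : PointedTranslationSurface) : Prop := Nonempty (P.X ≃ₜ Plane)

/-- `M̃ ⊆ M`: the set of classes of planar surfaces. -/
def Mtilde : Set ModuliSpace :=
  {m | ∃ P : PointedTranslationSurface, m = ModuliSpace.mk P ∧ IsPlanar P}

/-- The collection `Γ` of basepoint changing isomorphisms associated to `O ⊆ P`: the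
translation automorphisms of `P` carrying some point of `O` to the basepoint. -/
def bcAutos (P : PointedTranslationSurface) (O : Set P.X) : Set (P.X ≃ₜ P.X) :=
  {h | IsTranslationIsoCharts P.toTranslationSurface P.toTranslationSurface h ∧
       ∃ o ∈ O, h o = P.basepoint}

/-!
The group `Γ` acts on `S̃` by translation automorphisms. If such an automorphism `g` carries a
point `a` of a chart ball into another chart ball, it carries every point `a + w` of the first
ball to `g a + w` in the second, because the charts `c ∘ g⁻¹` and `d` develop the same straight
segments. Inside a single chart this shows that if `g` nearly fixes some point near `y`, then it
nearly fixes every point near `y`; this relation is transitive, so it propagates over the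
connected surface and `g` nearly fixes the basepoint `o`. As `Γ · o = Õ` is discrete, `g` then
fixes `o`, and a translation automorphism with a fixed point is the identity. So every point has a
neighbourhood that no nontrivial element of `Γ` moves into itself, and together with the
two-chart statement this makes the action free and properly discontinuous. Hence `S̃ → S̃ / Γ` is
a covering map whose fibre over the basepoint is the orbit `Õ`, and the charts of `S̃` descend
along its local inverses to a translation structure on `S̃ / Γ`.
-/

open Metric

lemma dist_add_sub_le {E : Type*} [SeminormedAddCommGroup E] (p q r s : E) :
    dist (p + (q - r)) s ≤ dist p s + dist q r := by
  rw [dist_eq_norm, dist_eq_norm, dist_eq_norm, show p + (q - r) - s = (p - s) + (q - r) by abel]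
  exact norm_add_le _ _

lemma OpenPartialHomeomorph.inter_preimage_ball_mem_nhds {X E : Type*} [TopologicalSpace X]
    [PseudoMetricSpace E] {c : OpenPartialHomeomorph X E} {x : X} (hx : x ∈ c.source) {r : ℝ}
    (hr : 0 < r) :
    c.source ∩ c ⁻¹' ball (c x) r ∈ 𝓝 x :=
  inter_mem (c.open_source.mem_nhds hx)
    ((c.continuousAt hx).preimage_mem_nhds (ball_mem_nhds _ hr))

lemma OpenPartialHomeomorph.exists_ball_subset_preimage_symm {X E : Type*}
    [TopologicalSpace X] [PseudoMetricSpace E] {c : OpenPartialHomeomorph X E} {x : X}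
    (hx : x ∈ c.source) {N : Set X} (hN : N ∈ 𝓝 x) :
    ∃ ρ > 0, ball (c x) ρ ⊆ c.symm ⁻¹' N := by
  rw [← c.symm_map_nhds_eq hx] at hN
  exact Metric.mem_nhds_iff.1 hN

instance Homeomorph.applyMulAction (X : Type*) [TopologicalSpace X] :
    MulAction (X ≃ₜ X) X where
  smul f x := f x
  one_smul _ := rfl
  mul_smul _ _ _ := rfl

instance Homeomorph.continuousConstSMul (X : Type*) [TopologicalSpace X] :
    ContinuousConstSMul (X ≃ₜ X) X :=
  ⟨fun f => f.continuous⟩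

instance Homeomorph.subgroupContinuousConstSMul {X : Type*} [TopologicalSpace X]
    (G : Subgroup (X ≃ₜ X)) : ContinuousConstSMul G X :=
  ⟨fun γ => (γ : X ≃ₜ X).continuous⟩

lemma ProperlyDiscontinuousSMul.of_subsingleton {Γ X : Type*} [TopologicalSpace X] [SMul Γ X]
    (h : ∀ x y : X, ∃ U ∈ 𝓝 x, ∃ U' ∈ 𝓝 y, {γ : Γ | ∃ a ∈ U, γ • a ∈ U'}.Subsingleton) :
    ProperlyDiscontinuousSMul Γ X := by
  refine ⟨fun {K L} hK hL => ?_⟩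
  have : {γ : Γ | ∃ p ∈ K ×ˢ L, γ • p.1 = p.2}.Finite := by
    refine (hK.prod hL).induction_on (p := fun s => {γ : Γ | ∃ p ∈ s, γ • p.1 = p.2}.Finite)
      (by simp) (fun s t hst ht => ht.subset fun γ ⟨p, hp, h⟩ => ⟨p, hst hp, h⟩)
      (fun s t hs ht => (hs.union ht).subset ?_) fun p _ => ?_
    · rintro γ ⟨q, hq | hq, h⟩
      exacts [Or.inl ⟨q, hq, h⟩, Or.inr ⟨q, hq, h⟩]
    · obtain ⟨U, hU, U', hU', hsub⟩ := h p.1 p.2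
      exact ⟨U ×ˢ U', mem_nhdsWithin_of_mem_nhds (prod_mem_nhds hU hU'),
        hsub.finite.subset fun γ ⟨q, hq, h⟩ => ⟨q.1, hq.1, h ▸ hq.2⟩⟩
  exact this.subset fun γ ⟨_, ⟨a, ha, rfl⟩, hb⟩ => ⟨(a, γ • a), ⟨ha, hb⟩, rfl⟩

namespace TranslationSurface

section TranslationAutomorphisms

variable (T : TranslationSurface)

lemma eventually_eq_add_sub {c₁ c₂ : OpenPartialHomeomorph T.X Plane}
    (h₁ : c₁ ∈ T.charts) (h₂ : c₂ ∈ T.charts) {z : T.X}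
    (m₁ : z ∈ c₁.source) (m₂ : z ∈ c₂.source) :
    ∀ᶠ y in 𝓝 z, y ∈ c₁.source ∧ y ∈ c₂.source ∧ c₂ y = c₁ y + (c₂ z - c₁ z) := by
  obtain ⟨v, hv⟩ := T.compat c₁ h₁ c₂ h₂ z ⟨m₁, m₂⟩
  have hz : c₂ z = c₁ z + v := hv.self_of_nhds ⟨m₁, m₂⟩
  filter_upwards [hv, c₁.open_source.mem_nhds m₁, c₂.open_source.mem_nhds m₂]
    with y hy hy₁ hy₂
  exact ⟨hy₁, hy₂, by rw [hy ⟨hy₁, hy₂⟩, hz, add_sub_cancel_left]⟩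

lemma restr_mem_charts {c : OpenPartialHomeomorph T.X Plane} (hc : c ∈ T.charts)
    {U : Set T.X} (hU : IsOpen U) : c.restr U ∈ T.charts := by
  have hsrc : (c.restr U).source = c.source ∩ U := c.restr_source' U hU
  refine T.maximal _ fun c' hc' => ⟨fun y hy => ?_, fun y hy => ?_⟩
  · rw [hsrc] at hy
    obtain ⟨v, hv⟩ := T.compat c hc c' hc' y ⟨hy.1.1, hy.2⟩
    exact ⟨v, hv.mono fun z hz hmem => hz ⟨(hsrc ▸ hmem.1).1, hmem.2⟩⟩
  · rw [hsrc] at hy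
    obtain ⟨v, hv⟩ := T.compat c' hc' c hc y ⟨hy.1, hy.2.1⟩
    exact ⟨v, hv.mono fun z hz hmem => hz ⟨hmem.1, (hsrc ▸ hmem.2).1⟩⟩

/-- The parameters `t` at which `e₁.symm (e₁ p + t • u) = e₂.symm (e₂ p + t • u)` form a clopen
subset of `[0, 1]`, by compatibility of `e₁` and `e₂`. -/
lemma symm_add_eq_symm_add {e₁ e₂ : OpenPartialHomeomorph T.X Plane}
    (h₁ : e₁ ∈ T.charts) (h₂ : e₂ ∈ T.charts) {p : T.X}
    (hp₁ : p ∈ e₁.source) (hp₂ : p ∈ e₂.source) {u : Plane}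
    (hs₁ : segment ℝ (e₁ p) (e₁ p + u) ⊆ e₁.target)
    (hs₂ : segment ℝ (e₂ p) (e₂ p + u) ⊆ e₂.target) :
    e₁.symm (e₁ p + u) = e₂.symm (e₂ p + u) := by
  have hmem : ∀ {e : OpenPartialHomeomorph T.X Plane}, segment ℝ (e p) (e p + u) ⊆ e.target →
      ∀ t : unitInterval, e p + (t : ℝ) • u ∈ e.target :=
    fun hs t => hs <| by
      rw [segment_eq_image']
      exact ⟨t, t.2, by rw [add_sub_cancel_left]⟩
  have hcont : ∀ {e : OpenPartialHomeomorph T.X Plane}, segment ℝ (e p) (e p + u) ⊆ e.target →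
      Continuous fun t : unitInterval => e.symm (e p + (t : ℝ) • u) :=
    fun {e} hs =>
      e.continuousOn_symm.comp_continuous (by fun_prop) (hmem hs)
  let A : Set unitInterval :=
    {t | e₁.symm (e₁ p + (t : ℝ) • u) = e₂.symm (e₂ p + (t : ℝ) • u)}
  have hA : IsClopen A := by
    refine ⟨isClosed_eq (hcont hs₁) (hcont hs₂), isOpen_iff_mem_nhds.2 fun t₀ ht₀ => ?_⟩
    have hz : e₁.symm (e₁ p + (t₀ : ℝ) • u) = e₂.symm (e₂ p + (t₀ : ℝ) • u) := ht₀
    have hz₂ : e₁.symm (e₁ p + (t₀ : ℝ) • u) ∈ e₂.source := by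
      rw [hz]; exact e₂.map_target (hmem hs₂ t₀)
    filter_upwards [(hcont hs₁).continuousAt.eventually
      (T.eventually_eq_add_sub h₁ h₂ (e₁.map_target (hmem hs₁ t₀)) hz₂)] with t ht
    obtain ⟨-, ht₂, ht⟩ := ht
    rw [e₁.right_inv (hmem hs₁ t), e₁.right_inv (hmem hs₁ t₀), hz,
      e₂.right_inv (hmem hs₂ t₀)] at ht
    show e₁.symm _ = e₂.symm _
    rw [← e₂.left_inv ht₂, ht]
    congr 1
    abel
  have h1 : (1 : unitInterval) ∈ A := by
    rw [hA.eq_univ ⟨0, by simp [A, e₁.left_inv hp₁, e₂.left_inv hp₂]⟩]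
    trivial
  simpa [A] using h1

lemma exists_chart_ball (x : T.X) :
    ∃ c ∈ T.charts, x ∈ c.source ∧ ∃ r > 0, ball (c x) r ⊆ c.target := by
  obtain ⟨c, hc, hx⟩ := T.chart_cover x
  exact ⟨c, hc, hx, Metric.isOpen_iff.1 c.open_target _ (c.map_source hx)⟩

def Tethered (y z : T.X) : Prop :=
  ∀ N ∈ 𝓝 z, ∃ V ∈ 𝓝 y, ∀ g : T.X ≃ₜ T.X, IsTranslationIsoCharts T T g →
    ∀ a ∈ V, g a ∈ V → g z ∈ N

variable {T} {g : T.X ≃ₜ T.X}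

lemma pushforward_mem_charts (hg : IsTranslationIsoCharts T T g)
    {c : OpenPartialHomeomorph T.X Plane} (hc : c ∈ T.charts) : pushforward g c ∈ T.charts := by
  rw [hg]
  exact ⟨c, hc, rfl⟩

/-- Compare the chart `c ∘ g⁻¹` with `d` along the segment issuing from `g a`. -/
lemma apply_eq_symm_add (hg : IsTranslationIsoCharts T T g)
    {c d : OpenPartialHomeomorph T.X Plane} (hc : c ∈ T.charts) (hd : d ∈ T.charts)
    {a x : T.X} (ha : a ∈ c.source) (hx : x ∈ c.source) (hga : g a ∈ d.source)
    (hsc : segment ℝ (c a) (c x) ⊆ c.target)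
    (hsd : segment ℝ (d (g a)) (d (g a) + (c x - c a)) ⊆ d.target) :
    g x = d.symm (d (g a) + (c x - c a)) := by
  set e := pushforward g c
  have hea : e (g a) = c a := by simp [e, pushforward]
  have hga' : g a ∈ e.source := by simpa [e, pushforward] using ha
  have hse : segment ℝ (e (g a)) (e (g a) + (c x - c a)) ⊆ e.target := by
    simpa [e, pushforward, hea] using hsc
  rw [← T.symm_add_eq_symm_add (pushforward_mem_charts hg hc) hd hga' hga hse hsd, hea,
    add_sub_cancel, show e.symm (c x) = g (c.symm (c x)) from rfl, c.left_inv hx]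

lemma Tethered.trans {y z w : T.X} (hyz : T.Tethered y z) (hzw : T.Tethered z w) :
    T.Tethered y w := by
  intro N hN
  obtain ⟨V, hV, hVN⟩ := hzw N hN
  obtain ⟨V', hV', hV'V⟩ := hyz V hV
  exact ⟨V', hV', fun g hg a ha hga =>
    hVN g hg z (mem_of_mem_nhds hV) (hV'V g hg a ha hga)⟩

lemma exists_mem_nhds_tethered (y : T.X) :
    ∃ W ∈ 𝓝 y, ∀ z ∈ W, ∀ z' ∈ W, T.Tethered z z' := by
  obtain ⟨c, hc, hy, r, hr, hball⟩ := T.exists_chart_ball y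
  refine ⟨_, c.inter_preimage_ball_mem_nhds hy (by positivity : 0 < r / 8),
    fun z ⟨hz, hzy⟩ z' ⟨hz', hz'y⟩ N hN => ?_⟩
  obtain ⟨ρ, hρ, hρN⟩ := c.exists_ball_subset_preimage_symm hz' hN
  set η := min ρ r / 4
  have hηρ : η ≤ ρ / 4 := by have := min_le_left ρ r; simp only [η]; linarith
  have hηr : η ≤ r / 4 := by have := min_le_right ρ r; simp only [η]; linarith
  refine ⟨_, c.inter_preimage_ball_mem_nhds hz (by positivity : 0 < η),
    fun g hg a ⟨ha, haz⟩ ⟨hga, hgaz⟩ => ?_⟩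
  rw [mem_preimage, mem_ball] at hzy hz'y haz hgaz
  have h₁ := dist_triangle (c a) (c z) (c y)
  have h₂ := dist_triangle (c (g a)) (c z) (c y)
  have h₃ := dist_add_sub_le (c (g a)) (c z') (c a) (c y)
  have h₄ := dist_triangle_right (c (g a)) (c a) (c z)
  have h₅ := dist_triangle_right (c z') (c a) (c y)
  have h₆ : dist (c (g a) + (c z' - c a)) (c z') = dist (c (g a)) (c a) := by
    rw [add_sub_left_comm, dist_self_add_left, ← dist_eq_norm]
  have hsub : ∀ {p q}, dist p (c y) < r → dist q (c y) < r → segment ℝ p q ⊆ c.target :=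
    fun hp hq => ((convex_ball _ _).segment_subset hp hq).trans hball
  rw [T.apply_eq_symm_add hg hc hc ha hz' hga (hsub (by linarith) (by linarith))
    (hsub (by linarith) (by linarith))]
  exact hρN (mem_ball.2 (by linarith))

theorem tethered (y z : T.X) : T.Tethered y z := by
  refine PreconnectedSpace.induction₂' _ (fun y => ?_) ⟨fun _ _ _ => Tethered.trans⟩ y z
  obtain ⟨W, hW, hWW⟩ := T.exists_mem_nhds_tethered y
  filter_upwards [hW] with z hz
  exact ⟨hWW y (mem_of_mem_nhds hW) z hz, hWW z hz y (mem_of_mem_nhds hW)⟩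

lemma eq_one_of_apply_eq_self (hg : IsTranslationIsoCharts T T g) {x : T.X} (hx : g x = x) :
    g = 1 := by
  ext z
  refine (specializes_iff_pure.2 <| pure_le_iff.2 fun N hN => ?_).eq
  obtain ⟨V, hV, hVN⟩ := T.tethered x z N hN
  exact hVN g hg x (mem_of_mem_nhds hV) (by rw [hx]; exact mem_of_mem_nhds hV)

lemma exists_mem_nhds_forall_eq_one {G : Set (T.X ≃ₜ T.X)}
    (hG : ∀ γ ∈ G, IsTranslationIsoCharts T T γ) {o : T.X} {N : Set T.X} (hN : N ∈ 𝓝 o)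
    (hNo : ∀ γ ∈ G, γ o ∈ N → γ o = o) (y : T.X) :
    ∃ V ∈ 𝓝 y, ∀ γ ∈ G, ∀ a ∈ V, γ a ∈ V → γ = 1 := by
  obtain ⟨V, hV, hVN⟩ := T.tethered y o N hN
  exact ⟨V, hV, fun γ hγ a ha hγa =>
    eq_one_of_apply_eq_self (hG γ hγ) (hNo γ hγ (hVN γ (hG γ hγ) a ha hγa))⟩

lemma exists_mem_nhds_apply_mem (x : T.X) {y : T.X} {N : Set T.X} (hN : N ∈ 𝓝 y) :
    ∃ U ∈ 𝓝 x, ∃ U' ∈ 𝓝 y, ∀ g : T.X ≃ₜ T.X, IsTranslationIsoCharts T T g →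
      ∀ a ∈ U, g a ∈ U' → g x ∈ N := by
  obtain ⟨c, hc, hx, r, hr, hcr⟩ := T.exists_chart_ball x
  obtain ⟨d, hd, hy, s, hs, hds⟩ := T.exists_chart_ball y
  obtain ⟨ρ, hρ, hρN⟩ := d.exists_ball_subset_preimage_symm hy hN
  set η := min r (min s ρ) / 2
  have hηr : η ≤ r / 2 := by have := min_le_left r (min s ρ); simp only [η]; linarith
  have hηs : η ≤ s / 2 := by
    have := min_le_left s ρ; have := min_le_right r (min s ρ); simp only [η]; linarith
  have hηρ : η ≤ ρ / 2 := by
    have := min_le_right s ρ; have := min_le_right r (min s ρ); simp only [η]; linarith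
  refine ⟨_, c.inter_preimage_ball_mem_nhds hx (by positivity : 0 < η),
    _, d.inter_preimage_ball_mem_nhds hy (by positivity : 0 < η),
    fun g hg a ⟨ha, hax⟩ ⟨hga, hgay⟩ => ?_⟩
  rw [mem_preimage, mem_ball] at hax hgay
  have h₁ := dist_add_sub_le (d (g a)) (c x) (c a) (d y)
  rw [dist_comm (c x)] at h₁
  have hsc : segment ℝ (c a) (c x) ⊆ c.target :=
    ((convex_ball _ _).segment_subset (mem_ball.2 (by linarith)) (mem_ball_self hr)).trans hcr
  have hsd : segment ℝ (d (g a)) (d (g a) + (c x - c a)) ⊆ d.target :=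
    ((convex_ball _ _).segment_subset (mem_ball.2 (by linarith))
      (mem_ball.2 (by linarith))).trans hds
  rw [T.apply_eq_symm_add hg hc hd ha hx hga hsc hsd]
  exact hρN (mem_ball.2 (by linarith))

end TranslationAutomorphisms

section Action

variable {T : TranslationSurface} {G : Subgroup (T.X ≃ₜ T.X)}

lemma isCancelSMul (hG : ∀ γ ∈ G, IsTranslationIsoCharts T T γ) : IsCancelSMul G T.X :=
  isCancelSMul_iff_eq_one_of_smul_eq.2 fun γ _ h =>
    Subtype.ext (eq_one_of_apply_eq_self (hG γ γ.2) h)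

theorem properlyDiscontinuousSMul (hG : ∀ γ ∈ G, IsTranslationIsoCharts T T γ)
    (hV : ∀ y, ∃ V ∈ 𝓝 y, ∀ γ ∈ G, ∀ a ∈ V, γ a ∈ V → γ = 1) :
    ProperlyDiscontinuousSMul G T.X := by
  refine .of_subsingleton fun x y => ?_
  obtain ⟨V, hV, hVG⟩ := hV y
  obtain ⟨U, hU, U', hU', hUU'⟩ := T.exists_mem_nhds_apply_mem x hV
  refine ⟨U, hU, U', hU', fun γ ⟨a, ha, hγa⟩ γ' ⟨a', ha', hγa'⟩ => ?_⟩
  have hγx := hUU' γ (hG γ γ.2) a ha hγa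
  have hγ'x := hUU' γ' (hG γ' γ'.2) a' ha' hγa'
  have h := hVG (γ' * γ⁻¹) (G.mul_mem γ'.2 (G.inv_mem γ.2)) ((γ : T.X ≃ₜ T.X) x) hγx
    (by simpa using hγ'x)
  exact Subtype.ext (mul_inv_eq_one.1 h).symm

end Action

section Descent

lemma translationCompatible_of_cover {Y : Type} [TopologicalSpace Y]
    {A : Set (OpenPartialHomeomorph Y Plane)} (hcover : ∀ y : Y, ∃ a ∈ A, y ∈ a.source)
    {c₁ c₂ : OpenPartialHomeomorph Y Plane} (h₁ : ∀ a ∈ A, TranslationCompatible c₁ a)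
    (h₂ : ∀ a ∈ A, TranslationCompatible a c₂) : TranslationCompatible c₁ c₂ := by
  rintro y ⟨hy₁, hy₂⟩
  obtain ⟨a, ha, hya⟩ := hcover y
  obtain ⟨v₁, hv₁⟩ := h₁ a ha y ⟨hy₁, hya⟩
  obtain ⟨v₂, hv₂⟩ := h₂ a ha y ⟨hya, hy₂⟩
  refine ⟨v₁ + v₂, ?_⟩
  filter_upwards [hv₁, hv₂, a.open_source.eventually_mem hya] with z hz₁ hz₂ hza hz
  rw [hz₂ ⟨hza, hz.2⟩, hz₁ ⟨hz.1, hza⟩, add_assoc]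

def ofAtlas (Y : Type) [TopologicalSpace Y] [T2Space Y] [ConnectedSpace Y]
    (A : Set (OpenPartialHomeomorph Y Plane)) (hcover : ∀ y : Y, ∃ a ∈ A, y ∈ a.source)
    (hA : ∀ a ∈ A, ∀ b ∈ A, TranslationCompatible a b) : TranslationSurface where
  X := Y
  charts := {c | ∀ a ∈ A, TranslationCompatible c a ∧ TranslationCompatible a c}
  chart_cover y :=
    let ⟨a, ha, hy⟩ := hcover y
    ⟨a, fun b hb => ⟨hA a ha b hb, hA b hb a ha⟩, hy⟩
  compat _ h₁ _ h₂ :=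
    translationCompatible_of_cover hcover (fun a ha => (h₁ a ha).1) fun a ha => (h₂ a ha).2
  maximal _ hc a ha := hc a fun b hb => ⟨hA a ha b hb, hA b hb a ha⟩

lemma subset_charts_ofAtlas {Y : Type} [TopologicalSpace Y] [T2Space Y] [ConnectedSpace Y]
    {A : Set (OpenPartialHomeomorph Y Plane)} (hcover : ∀ y : Y, ∃ a ∈ A, y ∈ a.source)
    (hA : ∀ a ∈ A, ∀ b ∈ A, TranslationCompatible a b) : A ⊆ (ofAtlas Y A hcover hA).charts :=
  fun a ha b hb => ⟨hA a ha b hb, hA b hb a ha⟩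

variable (T : TranslationSurface) {Y : Type} [TopologicalSpace Y]

def descendedAtlas (q : T.X → Y) : Set (OpenPartialHomeomorph Y Plane) :=
  {c' | ∃ e : OpenPartialHomeomorph T.X Y, ⇑e = q ∧ ∃ c ∈ T.charts, c' = e.symm.trans c}

variable {T} {q : T.X → Y}

lemma mem_source_symm_trans {e : OpenPartialHomeomorph T.X Y}
    {c : OpenPartialHomeomorph T.X Plane} {x : T.X} (hxe : x ∈ e.source) (hxc : x ∈ c.source) :
    e x ∈ (e.symm.trans c).source := by
  simpa [OpenPartialHomeomorph.trans_source, e.map_source hxe, e.left_inv hxe] using hxc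

lemma descendedAtlas_cover (hq : IsLocalHomeomorph q) (hsurj : Function.Surjective q) (y : Y) :
    ∃ a ∈ T.descendedAtlas q, y ∈ a.source := by
  obtain ⟨x, rfl⟩ := hsurj y
  obtain ⟨e, hxe, rfl⟩ := hq x
  obtain ⟨c, hc, hxc⟩ := T.chart_cover x
  exact ⟨_, ⟨e, rfl, c, hc, rfl⟩, mem_source_symm_trans hxe hxc⟩

lemma descendedAtlas_compat
    (hq : ∀ a b, q a = q b →
      ∃ g : T.X ≃ₜ T.X, IsTranslationIsoCharts T T g ∧ q ∘ g = q ∧ g a = b) :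
    ∀ c₁ ∈ T.descendedAtlas q, ∀ c₂ ∈ T.descendedAtlas q, TranslationCompatible c₁ c₂ := by
  rintro _ ⟨e₁, he₁, k₁, hk₁, rfl⟩ _ ⟨e₂, he₂, k₂, hk₂, rfl⟩ s ⟨hs₁, hs₂⟩
  simp only [OpenPartialHomeomorph.trans_source, OpenPartialHomeomorph.symm_source,
    mem_inter_iff, mem_preimage] at hs₁ hs₂
  obtain ⟨g, hg, hqg, hgu⟩ := hq (e₂.symm s) (e₁.symm s) <| (congrFun he₂ _).symm.trans <|
    (e₂.right_inv hs₂.1).trans <| (e₁.right_inv hs₁.1).symm.trans (congrFun he₁ _)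
  set k := pushforward g k₂
  have hk : k ∈ T.charts := pushforward_mem_charts hg hk₂
  have hu₁k : e₁.symm s ∈ k.source := by simpa [k, pushforward, ← hgu] using hs₂.2
  have hsymm : ContinuousAt e₁.symm s := e₁.continuousAt_symm hs₁.1
  have hlift : ∀ᶠ s' in 𝓝 s, g.symm (e₁.symm s') = e₂.symm s' := by
    have hu₂ : g.symm (e₁.symm s) ∈ e₂.source := by
      rw [← hgu, g.symm_apply_apply]; exact e₂.map_target hs₂.1
    filter_upwards [(g.symm.continuous.continuousAt.comp hsymm).eventually
      (e₂.open_source.mem_nhds hu₂), e₁.open_target.mem_nhds hs₁.1] with s' hs' hs'₁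
    have hq' : e₂ (g.symm (e₁.symm s')) = s' := by
      rw [he₂, ← congrFun hqg, Function.comp_apply, g.apply_symm_apply, ← he₁,
        e₁.right_inv hs'₁]
    rw [← e₂.left_inv (show g.symm (e₁.symm s') ∈ e₂.source from hs'), hq']
  refine ⟨k (e₁.symm s) - k₁ (e₁.symm s), ?_⟩
  filter_upwards [hlift, hsymm.eventually
    (T.eventually_eq_add_sub hk₁ hk hs₁.2 hu₁k)] with s' hs' hk' _
  simp only [OpenPartialHomeomorph.coe_trans, Function.comp_apply]
  rw [← hs', ← hk'.2.2]
  rfl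

end Descent

end TranslationSurface

lemma isLocalTranslationMap_of_descendedAtlas_subset {P S : PointedTranslationSurface}
    {q : P.X → S.X} (hq : IsLocalHomeomorph q) (hS : P.descendedAtlas q ⊆ S.charts) :
    IsLocalTranslationMap P S q := by
  intro x
  obtain ⟨e, hxe, rfl⟩ := hq x
  obtain ⟨c, hc, hxc⟩ := P.chart_cover x
  have hsrc : (c.restr e.source).source = c.source ∩ e.source := c.restr_source' _ e.open_source
  refine ⟨c.restr e.source, P.restr_mem_charts hc e.open_source, e.symm.trans c,
    hS ⟨e, rfl, c, hc, rfl⟩, 0, hsrc ▸ ⟨hxc, hxe⟩, fun y hy => ?_⟩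
  rw [hsrc] at hy
  exact ⟨TranslationSurface.mem_source_symm_trans hy.2 hy.1, by simp [e.left_inv hy.2]⟩

open TranslationSurface in
theorem exists_isTranslationCover_orbit (P : PointedTranslationSurface)
    [SimplyConnectedSpace P.X] [LocallyCompactSpace P.X] (G : Subgroup (P.X ≃ₜ P.X))
    (hG : ∀ γ ∈ G, IsTranslationIsoCharts P.toTranslationSurface P.toTranslationSurface γ)
    (hV : ∀ y, ∃ V ∈ 𝓝 y, ∀ γ ∈ G, ∀ a ∈ V, γ a ∈ V → γ = 1) :
    ∃ (S : PointedTranslationSurface) (p : P.X → S.X),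
      IsTranslationCover P S p ∧ p ⁻¹' {S.basepoint} = MulAction.orbit G P.basepoint := by
  have := properlyDiscontinuousSMul hG hV
  have := isCancelSMul hG
  have hcov : IsQuotientCoveringMap (Quotient.mk (MulAction.orbitRel G P.X)) G :=
    isQuotientCoveringMap_quotientMk_of_properlyDiscontinuousSMul
  set q := Quotient.mk (MulAction.orbitRel G P.X)
  have hdeck : ∀ a b, q a = q b → ∃ g : P.X ≃ₜ P.X,
      IsTranslationIsoCharts P.toTranslationSurface P.toTranslationSurface g ∧ q ∘ g = q ∧
        g a = b := by
    intro a b hab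
    obtain ⟨γ, rfl⟩ := hcov.apply_eq_iff_mem_orbit.1 hab.symm
    exact ⟨γ, hG γ γ.2, funext fun x => hcov.map_smul γ, rfl⟩
  have hloc := hcov.isCoveringMap.isLocalHomeomorph
  have hcover := descendedAtlas_cover hloc hcov.surjective
  have hcompat := descendedAtlas_compat hdeck
  let S : PointedTranslationSurface :=
    { toTranslationSurface := ofAtlas _ _ hcover hcompat
      basepoint := q P.basepoint }
  refine ⟨S, q, ⟨hcov.isCoveringMap, inferInstance, rfl,
    isLocalTranslationMap_of_descendedAtlas_subset hloc (subset_charts_ofAtlas hcover hcompat)⟩,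
    ?_⟩
  ext z
  exact hcov.apply_eq_iff_mem_orbit

section BasepointChange

variable {P : PointedTranslationSurface} {O : Set P.X}

def bcSubgroup (hone : Homeomorph.refl P.X ∈ bcAutos P O)
    (hinv : ∀ h ∈ bcAutos P O, h.symm ∈ bcAutos P O)
    (hmul : ∀ g ∈ bcAutos P O, ∀ h ∈ bcAutos P O, g.trans h ∈ bcAutos P O) :
    Subgroup (P.X ≃ₜ P.X) where
  carrier := bcAutos P O
  -- `g * h = h.trans g` in the group `P.X ≃ₜ P.X`
  mul_mem' {g h} hg hh := hmul h hh g hg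
  one_mem' := hone
  inv_mem' {g} hg := hinv g hg

lemma apply_basepoint_mem (hinv : ∀ h ∈ bcAutos P O, h.symm ∈ bcAutos P O)
    {γ : P.X ≃ₜ P.X} (hγ : γ ∈ bcAutos P O) : γ P.basepoint ∈ O := by
  obtain ⟨-, o, ho, hγo⟩ := hinv γ hγ
  rwa [← γ.apply_symm_apply o, hγo] at ho

lemma mem_orbit_bcSubgroup_iff (hbc : ∀ o ∈ O, ∃ h : P.X ≃ₜ P.X,
      IsTranslationIsoCharts P.toTranslationSurface P.toTranslationSurface h ∧
      h o = P.basepoint)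
    (hone : Homeomorph.refl P.X ∈ bcAutos P O)
    (hinv : ∀ h ∈ bcAutos P O, h.symm ∈ bcAutos P O)
    (hmul : ∀ g ∈ bcAutos P O, ∀ h ∈ bcAutos P O, g.trans h ∈ bcAutos P O) {z : P.X} :
    z ∈ MulAction.orbit (bcSubgroup hone hinv hmul) P.basepoint ↔ z ∈ O := by
  refine ⟨fun ⟨γ, hγ⟩ => hγ ▸ apply_basepoint_mem hinv γ.2, fun hz => ?_⟩
  obtain ⟨h, hh, hhz⟩ := hbc z hz
  refine ⟨⟨h.symm, hinv h ⟨hh, z, hz, hhz⟩⟩, ?_⟩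
  show h.symm P.basepoint = z
  rw [← hhz, h.symm_apply_apply]

end BasepointChange

/-- **Quotient construction** (Lemma `lem:convergence`): if `S̃` is planar, `Õ ⊆ S̃` is
discrete, each point of `Õ` admits a basepoint changing translation automorphism, and the
collection `Γ` of these automorphisms forms a group, then there is a translation surface
`S ∈ M` with universal cover `S̃` such that `p_S⁻¹(o_S) = Õ`. -/
theorem quotient_construction (P : PointedTranslationSurface)
    (hplanar : IsPlanar P) (O : Set P.X)
    (hdisc : ∀ x : P.X, ¬ AccPt x (Filter.principal O))
    (hbc : ∀ o ∈ O, ∃ h : P.X ≃ₜ P.X,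
      IsTranslationIsoCharts P.toTranslationSurface P.toTranslationSurface h ∧
      h o = P.basepoint)
    (hone : Homeomorph.refl P.X ∈ bcAutos P O)
    (hinv : ∀ h ∈ bcAutos P O, h.symm ∈ bcAutos P O)
    (hmul : ∀ g ∈ bcAutos P O, ∀ h ∈ bcAutos P O, g.trans h ∈ bcAutos P O) :
    ∃ (S : PointedTranslationSurface) (p : P.X → S.X),
      IsTranslationCover P S p ∧ p ⁻¹' {S.basepoint} = O := by
  obtain ⟨e⟩ := hplanar
  have := e.contractibleSpace
  have := (e.locallyCompactSpace_iff).2 inferInstance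
  obtain ⟨N, hN, hNO⟩ : ∃ N ∈ 𝓝 P.basepoint, ∀ o ∈ N ∩ O, o = P.basepoint := by
    simpa [accPt_iff_nhds] using hdisc P.basepoint
  have hG : ∀ γ ∈ bcSubgroup hone hinv hmul,
      IsTranslationIsoCharts P.toTranslationSurface P.toTranslationSurface γ := fun γ hγ => hγ.1
  obtain ⟨S, p, hp, hfiber⟩ := exists_isTranslationCover_orbit P _ hG
    (P.exists_mem_nhds_forall_eq_one hG hN fun γ hγ hγN =>
      hNO _ ⟨hγN, apply_basepoint_mem hinv hγ⟩)
  exact ⟨S, p, hp, hfiber.trans (Set.ext fun z => mem_orbit_bcSubgroup_iff hbc hone hinv hmul)⟩
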